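/- Suppose ‖x_i‖_1 ≤ R for all i ∈ {1,…,n}, where R > 0, and that n = m·b for integers m ≥ 1 and b ≥ 1. Fix W ∈ ℝ^{k×d}, β ∈ [0,1), and t ∈ ℕ. Let B_0, …, B_t ⊆ {1,…,n} be batches, each of size b, such that for every completed epoch k with 0 ≤ k ≤ ⌊t/m⌋ − 1, the batches B_{km}, B_{km+1}, …, B_{(k+1)m−1} are pairwise disjoint and their union is {1,…,n}. Define Ξ_j = (1/b)∑_{i∈B_j} g_i(W) − D(W). Then the exponentially weighted accumulated error satisfies ‖∑_{j=0}^{t} (1−β) β^{t−j} Ξ_j‖_1 ≤ (1−β) m (m² − 1) R · G(W). -/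

import Mathlib

open Finset Filter

/-- Softmax map on `ℝ^k`. -/
noncomputable def softmax {k : ℕ} (z : Fin k → ℝ) (c : Fin k) : ℝ :=
  Real.exp (z c) / ∑ j, Real.exp (z j)

/-- Logits `W x` of a linear classifier `W : ℝ^{k×d}` on input `x : ℝ^d`. -/
noncomputable def logits {k d : ℕ} (W : Fin k → Fin d → ℝ) (x : Fin d → ℝ) : Fin k → ℝ :=
  fun c => ∑ j, W c j * x j

/-- Cross-entropy loss `L(W) = -(1/n) ∑ᵢ log S_{yᵢ}(W xᵢ)`. -/
noncomputable def lossCE {n k d : ℕ} (x : Fin n → Fin d → ℝ) (y : Fin n → Fin k)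
    (W : Fin k → Fin d → ℝ) : ℝ :=
  -((1 : ℝ) / n) * ∑ i, Real.log (softmax (logits W (x i)) (y i))

/-- Proxy function `G(W) = (1/n) ∑ᵢ (1 - S_{yᵢ}(W xᵢ))`. -/
noncomputable def proxyG {n k d : ℕ} (x : Fin n → Fin d → ℝ) (y : Fin n → Fin k)
    (W : Fin k → Fin d → ℝ) : ℝ :=
  ((1 : ℝ) / n) * ∑ i, (1 - softmax (logits W (x i)) (y i))

/-- Per-sample gradient matrix `gᵢ(W) = (S(W xᵢ) - e_{yᵢ}) xᵢᵀ`. -/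
noncomputable def sampleGrad {k d : ℕ} (x : Fin d → ℝ) (y : Fin k)
    (W : Fin k → Fin d → ℝ) : Fin k → Fin d → ℝ :=
  fun c j => (softmax (logits W x) c - (if c = y then 1 else 0)) * x j

/-- Full gradient matrix `D(W) = (1/n) ∑ᵢ gᵢ(W)`. -/
noncomputable def gradCE {n k d : ℕ} (x : Fin n → Fin d → ℝ) (y : Fin n → Fin k)
    (W : Fin k → Fin d → ℝ) : Fin k → Fin d → ℝ :=
  fun c j => ((1 : ℝ) / n) * ∑ i, sampleGrad (x i) (y i) W c j

/-- Entry-wise 1-norm of a matrix. -/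
noncomputable def norm1M {k d : ℕ} (A : Fin k → Fin d → ℝ) : ℝ :=
  ∑ c, ∑ j, |A c j|

/-- 1-norm of a vector. -/
noncomputable def norm1V {d : ℕ} (v : Fin d → ℝ) : ℝ := ∑ j, |v j|

/-- `min_{c ≠ y} (e_y - e_c)ᵀ A x`. -/
noncomputable def marginMin {k d : ℕ} (hk : 2 ≤ k) (A : Fin k → Fin d → ℝ)
    (x : Fin d → ℝ) (y : Fin k) : ℝ :=
  (Finset.univ.erase y).inf'
    (by
      obtain ⟨cne, hcne⟩ := Fintype.exists_ne_of_one_lt_card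
        (by simpa using (by omega : 1 < k)) y
      exact ⟨cne, Finset.mem_erase.mpr ⟨hcne, Finset.mem_univ _⟩⟩)
    (fun c => logits A x y - logits A x c)

/-- `min_{i ∈ [n], c ≠ yᵢ} (e_{yᵢ} - e_c)ᵀ W xᵢ`. -/
noncomputable def dataMargin {n k d : ℕ} (hn : 1 ≤ n) (hk : 2 ≤ k)
    (x : Fin n → Fin d → ℝ) (y : Fin n → Fin k) (W : Fin k → Fin d → ℝ) : ℝ :=
  Finset.univ.inf' ⟨⟨0, by omega⟩, Finset.mem_univ _⟩
    (fun i => marginMin hk W (x i) (y i))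

/-- Max margin `γ` over the max-norm unit ball. -/
noncomputable def gammaMax {n k d : ℕ} (hn : 1 ≤ n) (hk : 2 ≤ k)
    (x : Fin n → Fin d → ℝ) (y : Fin n → Fin k) : ℝ :=
  sSup { g : ℝ | ∃ W' : Fin k → Fin d → ℝ, ‖W'‖ ≤ 1 ∧ g = dataMargin hn hk x y W' }

/-- Mini-batch gradient `(1/b) ∑_{i ∈ B} gᵢ(W)`. -/
noncomputable def batchGrad {n k d : ℕ} (x : Fin n → Fin d → ℝ) (y : Fin n → Fin k)
    (B : Finset (Fin n)) (b : ℕ) (W : Fin k → Fin d → ℝ) : Fin k → Fin d → ℝ :=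
  fun c j => ((1 : ℝ) / b) * ∑ i ∈ B, sampleGrad (x i) (y i) W c j

/-- Frobenius norm of a matrix. -/
noncomputable def frobNorm {k d : ℕ} (A : Fin k → Fin d → ℝ) : ℝ :=
  Real.sqrt (∑ c, ∑ j, (A c j) ^ 2)

/-!
Each noise term `Ξ_j` is `∑ᵢ aᵢ gᵢ(W)` with `|aᵢ| ≤ (m - 1)/n`, and
`‖gᵢ(W)‖₁ = 2 (1 - S_{yᵢ}(W xᵢ)) ‖xᵢ‖₁`, so `‖Ξ_j‖₁ ≤ 2 (m - 1) R G(W)`. The `Ξ_j` of a completed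
epoch sum to zero, so every partial sum `∑_{j < i} Ξ_j` with `i ≤ t` is a sum of at most `m - 1`
noise terms of the current epoch, and the full sum of at most `m`. Summation by parts against the
nondecreasing momentum weights `(1 - β) β^{t-j}`, the largest of which is `1 - β`, bounds the
accumulated error by `(2m - 1)(1 - β) · 2 (m - 1) R G(W) ≤ (1 - β) m (m² - 1) R G(W)`.
-/

lemma sum_abs_sub_ite_eq_two_mul {ι : Type*} [Fintype ι] [DecidableEq ι] {s : ι → ℝ}
    (hs0 : ∀ c, 0 ≤ s c) (hs1 : ∑ c, s c = 1) (y : ι) :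
    ∑ c, |s c - if c = y then 1 else 0| = 2 * (1 - s y) := by
  have hy : s y ≤ 1 := hs1 ▸ Finset.single_le_sum (fun c _ => hs0 c) (Finset.mem_univ y)
  have hrest : ∑ c ∈ univ.erase y, s c = 1 - s y := by
    rw [← hs1, ← Finset.add_sum_erase _ _ (Finset.mem_univ y)]; ring
  rw [← Finset.add_sum_erase _ _ (Finset.mem_univ y), if_pos rfl, abs_of_nonpos (by linarith),
    Finset.sum_congr rfl fun c hc => by rw [if_neg (Finset.ne_of_mem_erase hc), sub_zero,
      abs_of_nonneg (hs0 c)], hrest]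
  ring

section Softmax

variable {k : ℕ}

lemma softmax_nonneg (z : Fin k → ℝ) (c : Fin k) : 0 ≤ softmax z c :=
  div_nonneg (Real.exp_pos _).le (Finset.sum_nonneg fun _ _ => (Real.exp_pos _).le)

lemma sum_softmax (hk : 0 < k) (z : Fin k → ℝ) : ∑ c, softmax z c = 1 := by
  simp only [softmax]
  rw [← Finset.sum_div]
  exact div_self (Finset.sum_pos (fun _ _ => Real.exp_pos _) ⟨⟨0, hk⟩, Finset.mem_univ _⟩).ne'

lemma softmax_le_one (hk : 0 < k) (z : Fin k → ℝ) (c : Fin k) : softmax z c ≤ 1 :=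
  sum_softmax hk z ▸ Finset.single_le_sum (fun j _ => softmax_nonneg z j) (Finset.mem_univ c)

end Softmax

section EntrywiseNorm

variable {k d : ℕ}

noncomputable def norm1Seminorm (k d : ℕ) : Seminorm ℝ (Fin k → Fin d → ℝ) :=
  Seminorm.of norm1M
    (fun A C => by
      simp only [norm1M, Pi.add_apply, ← Finset.sum_add_distrib]
      gcongr
      exact abs_add_le _ _)
    (fun a A => by simp only [norm1M, Pi.smul_apply, smul_eq_mul, abs_mul, Finset.mul_sum,
      Real.norm_eq_abs])

@[simp]
lemma norm1Seminorm_apply (A : Fin k → Fin d → ℝ) : norm1Seminorm k d A = norm1M A := rfl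

lemma norm1M_outer (u : Fin k → ℝ) (v : Fin d → ℝ) :
    norm1M (fun c j => u c * v j) = (∑ c, |u c|) * norm1V v := by
  simp only [norm1M, norm1V, abs_mul, Finset.sum_mul_sum]

lemma norm1M_sampleGrad (x : Fin d → ℝ) (y : Fin k) (W : Fin k → Fin d → ℝ) :
    norm1M (sampleGrad x y W) = 2 * (1 - softmax (logits W x) y) * norm1V x := by
  unfold sampleGrad
  rw [norm1M_outer, sum_abs_sub_ite_eq_two_mul (softmax_nonneg _) (sum_softmax y.pos _)]

end EntrywiseNorm

section EpochCancellation

lemma sum_range_mul_add_eq_of_blocks {M : Type*} [AddCommMonoid M] {Ξ : ℕ → M} {m q : ℕ}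
    (hzero : ∀ q' < q, ∑ l ∈ range m, Ξ (q' * m + l) = 0) (s : ℕ) :
    ∑ j ∈ range (q * m + s), Ξ j = ∑ l ∈ range s, Ξ (q * m + l) := by
  have hfull : ∑ j ∈ range (q * m), Ξ j = 0 := by
    induction q with
    | zero => simp
    | succ q ih =>
      rw [Nat.succ_mul, Finset.sum_range_add, ih (fun q' hq' => hzero q' (by omega)),
        hzero q q.lt_succ_self, add_zero]
  rw [Finset.sum_range_add, hfull, zero_add]

variable {E : Type*} [AddCommGroup E] [Module ℝ E] (p : Seminorm ℝ E)

lemma Seminorm.map_finset_sum_le {ι : Type*} (s : Finset ι) (g : ι → E) :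
    p (∑ i ∈ s, g i) ≤ ∑ i ∈ s, p (g i) :=
  Finset.le_sum_of_subadditive p (map_zero p).le (map_add_le_add p) s g

lemma Seminorm.map_sum_smul_le {ι : Type*} (s : Finset ι) (a : ι → ℝ) (g : ι → E) :
    p (∑ i ∈ s, a i • g i) ≤ ∑ i ∈ s, |a i| * p (g i) := by
  refine (p.map_finset_sum_le s _).trans_eq (Finset.sum_congr rfl fun i _ => ?_)
  rw [map_smul_eq_mul, Real.norm_eq_abs]

lemma Seminorm.map_sum_range_smul_le_of_monotone {f : ℕ → ℝ} (hf : Monotone f) (hf0 : 0 ≤ f 0)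
    (g : ℕ → E) (n : ℕ) {M : ℝ} (hM : ∀ i < n - 1, p (∑ j ∈ range (i + 1), g j) ≤ M) :
    p (∑ i ∈ range n, f i • g i) ≤
      f (n - 1) * p (∑ j ∈ range n, g j) + (f (n - 1) - f 0) * M := by
  have hfn : 0 ≤ f (n - 1) := hf0.trans (hf (Nat.zero_le _))
  have hincr : ∑ i ∈ range (n - 1), |f (i + 1) - f i| * p (∑ j ∈ range (i + 1), g j)
      ≤ (f (n - 1) - f 0) * M := calc
    _ ≤ ∑ i ∈ range (n - 1), (f (i + 1) - f i) * M := by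
      refine Finset.sum_le_sum fun i hi => ?_
      have hstep : 0 ≤ f (i + 1) - f i := sub_nonneg.2 (hf i.le_succ)
      rw [abs_of_nonneg hstep]
      exact mul_le_mul_of_nonneg_left (hM i (Finset.mem_range.1 hi)) hstep
    _ = (f (n - 1) - f 0) * M := by rw [← Finset.sum_mul, Finset.sum_range_sub]
  rw [Finset.sum_range_by_parts]
  calc _ ≤ p (f (n - 1) • ∑ j ∈ range n, g j)
        + p (∑ i ∈ range (n - 1), (f (i + 1) - f i) • ∑ j ∈ range (i + 1), g j) :=
        map_sub_le_add p _ _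
    _ ≤ _ := by
      rw [map_smul_eq_mul, Real.norm_eq_abs, abs_of_nonneg hfn]
      exact add_le_add_right ((p.map_sum_smul_le _ _ _).trans hincr) _

variable {Ξ : ℕ → E} {m t : ℕ} {C : ℝ}

lemma Seminorm.map_sum_range_le_of_blocks (hC : ∀ j ≤ t, p (Ξ j) ≤ C)
    (hzero : ∀ q, q + 1 ≤ t / m → ∑ l ∈ range m, Ξ (q * m + l) = 0)
    {q s : ℕ} (hq : q ≤ t / m) (hs : q * m + s ≤ t + 1) :
    p (∑ j ∈ range (q * m + s), Ξ j) ≤ s * C := by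
  rw [sum_range_mul_add_eq_of_blocks (fun q' hq' => hzero q' (by omega))]
  calc _ ≤ ∑ l ∈ range s, p (Ξ (q * m + l)) := p.map_finset_sum_le _ _
    _ ≤ (range s).card • C :=
      Finset.sum_le_card_nsmul _ _ _ fun l hl => hC _ (by simp at hl; omega)
    _ = s * C := by rw [Finset.card_range, nsmul_eq_mul]

lemma Seminorm.map_sum_range_smul_le_of_blocks {f : ℕ → ℝ} (hf : Monotone f) (hf0 : 0 ≤ f 0)
    (hm : 0 < m) (hC : ∀ j ≤ t, p (Ξ j) ≤ C)
    (hzero : ∀ q, q + 1 ≤ t / m → ∑ l ∈ range m, Ξ (q * m + l) = 0) :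
    p (∑ j ∈ range (t + 1), f j • Ξ j) ≤ (2 * m - 1) * f t * C := by
  have hC0 : 0 ≤ C := (apply_nonneg p _).trans (hC 0 t.zero_le)
  have hft : 0 ≤ f t := hf0.trans (hf t.zero_le)
  have hmid : ∀ i < t + 1 - 1, p (∑ j ∈ range (i + 1), Ξ j) ≤ (m - 1) * C := by
    intro i hi
    have hrem : (((i + 1) % m : ℕ) : ℝ) + 1 ≤ m := by exact_mod_cast Nat.mod_lt _ hm
    rw [← Nat.div_add_mod' (i + 1) m]
    refine (p.map_sum_range_le_of_blocks hC hzero (Nat.div_le_div_right (by omega))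
      (by rw [Nat.div_add_mod']; omega)).trans ?_
    exact mul_le_mul_of_nonneg_right (by linarith) hC0
  have hlast : p (∑ j ∈ range (t + 1), Ξ j) ≤ m * C := by
    have hrem : ((t % m : ℕ) : ℝ) + 1 ≤ m := by exact_mod_cast Nat.mod_lt _ hm
    rw [show t + 1 = t / m * m + (t % m + 1) by rw [← add_assoc, Nat.div_add_mod']]
    refine (p.map_sum_range_le_of_blocks hC hzero le_rfl
      (by rw [← add_assoc, Nat.div_add_mod'])).trans ?_
    exact mul_le_mul_of_nonneg_right (by push_cast; linarith) hC0
  have hm1 : (0 : ℝ) ≤ m - 1 := by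
    have : (1 : ℝ) ≤ m := by exact_mod_cast hm
    linarith
  calc _ ≤ f t * p (∑ j ∈ range (t + 1), Ξ j) + (f t - f 0) * ((m - 1) * C) :=
        p.map_sum_range_smul_le_of_monotone hf hf0 Ξ (t + 1) hmid
    _ ≤ f t * (m * C) + f t * ((m - 1) * C) := by
        gcongr
        linarith
    _ = (2 * m - 1) * f t * C := by ring

end EpochCancellation

section MiniBatchNoise

variable {n k d : ℕ} (x : Fin n → Fin d → ℝ) (y : Fin n → Fin k) (W : Fin k → Fin d → ℝ)

lemma proxyG_nonneg : 0 ≤ proxyG x y W :=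
  mul_nonneg (by positivity) (Finset.sum_nonneg fun i _ =>
    sub_nonneg.2 (softmax_le_one (y i).pos _ _))

noncomputable def batchWeight (B : Finset (Fin n)) (b : ℕ) (i : Fin n) : ℝ :=
  if i ∈ B then 1 / b else 0

lemma batchGrad_sub_gradCE (B : Finset (Fin n)) (b : ℕ) :
    batchGrad x y B b W - gradCE x y W =
      ∑ i, (batchWeight B b i - 1 / n) • sampleGrad (x i) (y i) W := by
  funext c j
  simp only [batchGrad, gradCE, batchWeight, Pi.sub_apply, Finset.sum_apply, Pi.smul_apply,
    smul_eq_mul, sub_mul, ite_mul, zero_mul, Finset.sum_sub_distrib, Finset.sum_ite_mem,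
    Finset.univ_inter, Finset.mul_sum]

lemma abs_batchWeight_sub_le {m b : ℕ} {B : Finset (Fin n)} (hB : B.card = b) (hnb : n = m * b)
    (i : Fin n) : |batchWeight B b i - 1 / n| ≤ (m - 1) / n := by
  have hn : (0 : ℝ) < n := by exact_mod_cast i.pos
  have hnb' : (n : ℝ) = m * b := by exact_mod_cast hnb
  unfold batchWeight
  split_ifs with hi
  · have hb : (0 : ℝ) < b := by exact_mod_cast hB ▸ Finset.card_pos.2 ⟨i, hi⟩
    have hbn : (b : ℝ) ≤ n := by
      exact_mod_cast hB ▸ (Finset.card_le_univ B).trans_eq (Fintype.card_fin n)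
    have hweight : (1 : ℝ) / b - 1 / n = (m - 1) / n := by
      field_simp
      linarith
    rw [← hweight, abs_of_nonneg (sub_nonneg.2 (one_div_le_one_div_of_le hb hbn))]
  · -- a batch missing some sample is a proper subset, which forces `m ≥ 2`
    have hbn : b < n := hB ▸ Finset.card_lt_univ_of_notMem hi |>.trans_eq (Fintype.card_fin n)
    have hm : (2 : ℝ) ≤ m := by
      have : 1 < m := by
        by_contra! h
        interval_cases m <;> omega
      exact_mod_cast this
    rw [zero_sub, abs_neg, abs_of_pos (by positivity)]
    gcongr
    linarith

lemma norm1Seminorm_batchGrad_sub_gradCE_le {R : ℝ} (hx : ∀ i, norm1V (x i) ≤ R) {m b : ℕ}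
    {B : Finset (Fin n)} (hB : B.card = b) (hnb : n = m * b) :
    norm1Seminorm k d (batchGrad x y B b W - gradCE x y W) ≤ 2 * (m - 1) * R * proxyG x y W := by
  rw [batchGrad_sub_gradCE]
  calc _ ≤ ∑ i, |batchWeight B b i - 1 / n|
        * norm1Seminorm k d (sampleGrad (x i) (y i) W) := (norm1Seminorm k d).map_sum_smul_le _ _ _
    _ ≤ ∑ i, (m - 1) / n * (2 * (1 - softmax (logits W (x i)) (y i)) * R) := by
      refine Finset.sum_le_sum fun i _ => ?_
      have hweight := abs_batchWeight_sub_le hB hnb i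
      have hgrad : norm1Seminorm k d (sampleGrad (x i) (y i) W)
          ≤ 2 * (1 - softmax (logits W (x i)) (y i)) * R := by
        rw [norm1Seminorm_apply, norm1M_sampleGrad]
        gcongr
        · linarith [softmax_le_one (y i).pos (logits W (x i)) (y i)]
        · exact hx i
      exact mul_le_mul hweight hgrad (apply_nonneg _ _) ((abs_nonneg _).trans hweight)
    _ = 2 * (m - 1) * R * proxyG x y W := by
      rw [proxyG, Finset.mul_sum, Finset.mul_sum]
      exact Finset.sum_congr rfl fun i _ => by ring

lemma sum_batchGrad_sub_gradCE_eq_zero {m b : ℕ} (hm : m ≠ 0) (hnb : n = m * b)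
    {B : ℕ → Finset (Fin n)} (hdisj : (range m : Set ℕ).PairwiseDisjoint B)
    (hcover : (range m).biUnion B = univ) :
    ∑ l ∈ range m, (batchGrad x y (B l) b W - gradCE x y W) = 0 := by
  have hweight : 1 / (n : ℝ) * m = 1 / b := by
    rw [hnb, Nat.cast_mul, one_div, mul_inv, mul_comm, ← mul_assoc,
      mul_inv_cancel₀ (by exact_mod_cast hm), one_mul, one_div]
  funext c j
  simp only [Finset.sum_apply, Pi.sub_apply, Pi.zero_apply, batchGrad, gradCE,
    Finset.sum_sub_distrib, ← Finset.mul_sum, ← Finset.sum_biUnion hdisj, hcover,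
    Finset.sum_const, Finset.card_range, nsmul_eq_mul, ← mul_assoc, hweight, sub_self]

end MiniBatchNoise

lemma two_mul_sub_one_mul_le_mul_sq_sub_one {m : ℕ} (hm : 1 ≤ m) :
    (2 * m - 1) * (2 * ((m : ℝ) - 1)) ≤ m * ((m : ℝ) ^ 2 - 1) := by
  rcases hm.eq_or_lt with rfl | hm2
  · norm_num
  · have : (2 : ℝ) ≤ m := by exact_mod_cast hm2
    nlinarith [sq_nonneg ((m : ℝ) - 1)]

theorem momentum_accumulated_noise_bound_general (n k d : ℕ)
    (x : Fin n → Fin d → ℝ) (y : Fin n → Fin k)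
    (R : ℝ) (hR : 0 < R) (hx : ∀ i, norm1V (x i) ≤ R)
    (m b : ℕ) (hm : 1 ≤ m) (hnb : n = m * b)
    (W : Fin k → Fin d → ℝ)
    (β : ℝ) (hβ0 : 0 ≤ β) (hβ1 : β < 1)
    (t : ℕ) (B : ℕ → Finset (Fin n))
    (hBcard : ∀ j, j ≤ t → (B j).card = b)
    (hdisj : ∀ kk : ℕ, kk + 1 ≤ t / m →
      ∀ l1 l2 : ℕ, l1 < m → l2 < m → l1 ≠ l2 →
        Disjoint (B (kk * m + l1)) (B (kk * m + l2)))
    (hcover : ∀ kk : ℕ, kk + 1 ≤ t / m →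
      (Finset.range m).biUnion (fun l => B (kk * m + l)) = Finset.univ) :
    norm1M (fun cc jj => ∑ j ∈ Finset.range (t + 1),
        (1 - β) * β ^ (t - j) * (batchGrad x y (B j) b W cc jj - gradCE x y W cc jj))
      ≤ (1 - β) * (m : ℝ) * ((m : ℝ) ^ 2 - 1) * R * proxyG x y W := by
  have hweights : Monotone fun j => (1 - β) * β ^ (t - j) := fun i j hij =>
    mul_le_mul_of_nonneg_left (pow_le_pow_of_le_one hβ0 hβ1.le (by omega)) (by linarith)
  have hnoise := (norm1Seminorm k d).map_sum_range_smul_le_of_blocks hweights (by positivity) hm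
    (fun j hj => norm1Seminorm_batchGrad_sub_gradCE_le x y W hx (hBcard j hj) hnb)
    (fun q hq => sum_batchGrad_sub_gradCE_eq_zero x y W (by omega) hnb
      (fun l1 hl1 l2 hl2 => hdisj q hq l1 l2 (by simpa using hl1) (by simpa using hl2))
      (hcover q hq))
  have hRG : 0 ≤ R * proxyG x y W := mul_nonneg hR.le (proxyG_nonneg x y W)
  calc _ = _ := by
        rw [norm1Seminorm_apply]
        congr 1
        funext cc jj
        simp only [Finset.sum_apply, Pi.smul_apply, Pi.sub_apply, smul_eq_mul]
    _ ≤ _ := hnoise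
    _ ≤ _ := by
      simp only [tsub_self, pow_zero, mul_one]
      nlinarith [two_mul_sub_one_mul_le_mul_sq_sub_one hm, mul_nonneg (sub_nonneg.2 hβ1.le) hRG]

/-- accumulated sampling error of momentum under random reshuffling:
`‖∑_{j=0}^{t} (1−β) β^{t−j} Ξ_j‖₁ ≤ (1−β) m (m² − 1) R · G(W)`, where
`Ξ_j = (1/b)∑_{i∈B_j} gᵢ(W) − D(W)` and within each completed epoch the batches
partition `{1,…,n}`. -/
theorem momentum_accumulated_noise_bound (n k d : ℕ)
    (hn : 1 ≤ n) (hk : 2 ≤ k) (hd : 1 ≤ d)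
    (x : Fin n → Fin d → ℝ) (y : Fin n → Fin k)
    (R : ℝ) (hR : 0 < R) (hx : ∀ i, norm1V (x i) ≤ R)
    (m b : ℕ) (hm : 1 ≤ m) (hb : 1 ≤ b) (hnb : n = m * b)
    (W : Fin k → Fin d → ℝ)
    (β : ℝ) (hβ0 : 0 ≤ β) (hβ1 : β < 1)
    (t : ℕ) (B : ℕ → Finset (Fin n))
    (hBcard : ∀ j, j ≤ t → (B j).card = b)
    (hdisj : ∀ kk : ℕ, kk + 1 ≤ t / m →
      ∀ l1 l2 : ℕ, l1 < m → l2 < m → l1 ≠ l2 →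
        Disjoint (B (kk * m + l1)) (B (kk * m + l2)))
    (hcover : ∀ kk : ℕ, kk + 1 ≤ t / m →
      (Finset.range m).biUnion (fun l => B (kk * m + l)) = Finset.univ) :
    norm1M (fun cc jj => ∑ j ∈ Finset.range (t + 1),
        (1 - β) * β ^ (t - j) * (batchGrad x y (B j) b W cc jj - gradCE x y W cc jj))
      ≤ (1 - β) * (m : ℝ) * ((m : ℝ) ^ 2 - 1) * R * proxyG x y W :=
  momentum_accumulated_noise_bound_general n k d x y R hR hx m b hm hnb W β hβ0 hβ1 t B hBcard hdisj
    hcover
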